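/- arXiv:1110.5955 — 2 statements merged into one kernel-verified Lean document; each statement's English description precedes it below -/
import Mathlib

section
/- If A and B are rings, X is an A-B-bimodule, and Y is a B-A-bimodule, then the composite of the functors Y ⊗_A - : Ã-Mod → B̃-Mod and X ⊗_B - : B̃-Mod → Ã-Mod is naturally isomorphic to the functor (X ⊗_B Y) ⊗_A - on Ã-Mod, sending (M, σ) to ((X ⊗_B Y) ⊗_A M, Id_{X⊗_B Y} ⊗ σ). -/
open MulOpposite

namespace Paper

noncomputable section

section Tens

variable (A : Type) [Ring A] (M N : Type) [AddCommGroup M] [AddCommGroup N]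
  [Module Aᵐᵒᵖ M] [Module A N]

/-- The balancing relations for the tensor product `M ⊗_A N` of a right `A`-module `M`
and a left `A`-module `N` over a (possibly noncommutative) ring `A`. -/
def TensRel : AddSubgroup (TensorProduct ℤ M N) :=
  AddSubgroup.closure {z | ∃ (a : A) (m : M) (n : N),
    z = (op a • m) ⊗ₜ[ℤ] n - m ⊗ₜ[ℤ] (a • n)}

/-- The tensor product `M ⊗_A N` over a (possibly noncommutative) ring `A`,
where `M` is a right `A`-module and `N` is a left `A`-module. -/
def Tens : Type := (TensorProduct ℤ M N) ⧸ TensRel A M N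

instance : AddCommGroup (Tens A M N) :=
  QuotientAddGroup.Quotient.addCommGroup _

variable {A M N}

/-- The canonical map `M × N → M ⊗_A N`, `(m, n) ↦ m ⊗ n`. -/
def Tens.mk (m : M) (n : N) : Tens A M N := QuotientAddGroup.mk (m ⊗ₜ[ℤ] n)

theorem Tens.mk_add_left (m m' : M) (n : N) :
    (Tens.mk (m + m') n : Tens A M N) = Tens.mk m n + Tens.mk m' n := by
  show QuotientAddGroup.mk _ = QuotientAddGroup.mk _
  rw [TensorProduct.add_tmul]

theorem Tens.mk_add_right (m : M) (n n' : N) :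
    (Tens.mk m (n + n') : Tens A M N) = Tens.mk m n + Tens.mk m n' := by
  show QuotientAddGroup.mk _ = QuotientAddGroup.mk _
  rw [TensorProduct.tmul_add]

@[simp] theorem Tens.mk_zero_left (n : N) : (Tens.mk 0 n : Tens A M N) = 0 := by
  show QuotientAddGroup.mk _ = QuotientAddGroup.mk _
  rw [TensorProduct.zero_tmul]

@[simp] theorem Tens.mk_zero_right (m : M) : (Tens.mk m 0 : Tens A M N) = 0 := by
  show QuotientAddGroup.mk _ = QuotientAddGroup.mk _
  rw [TensorProduct.tmul_zero]

theorem Tens.mk_balance (a : A) (m : M) (n : N) :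
    (Tens.mk (op a • m) n : Tens A M N) = Tens.mk m (a • n) := by
  refine (QuotientAddGroup.eq (s := TensRel A M N) ..).2 ?_
  have h : ((op a • m) ⊗ₜ[ℤ] n - m ⊗ₜ[ℤ] (a • n)) ∈ TensRel A M N :=
    AddSubgroup.subset_closure ⟨a, m, n, rfl⟩
  simpa [neg_add_eq_sub] using AddSubgroup.neg_mem _ h

@[simp] theorem Tens.mk_neg_left (m : M) (n : N) :
    (Tens.mk (-m) n : Tens A M N) = -Tens.mk m n := by
  show QuotientAddGroup.mk _ = -QuotientAddGroup.mk _
  rw [TensorProduct.neg_tmul]; rfl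

@[simp] theorem Tens.mk_neg_right (m : M) (n : N) :
    (Tens.mk m (-n) : Tens A M N) = -Tens.mk m n := by
  show QuotientAddGroup.mk _ = -QuotientAddGroup.mk _
  rw [TensorProduct.tmul_neg]; rfl

theorem Tens.ind {motive : Tens A M N → Prop} (zero : motive 0)
    (mk : ∀ m n, motive (Tens.mk m n))
    (add : ∀ x y, motive x → motive y → motive (x + y)) : ∀ z, motive z := by
  intro z
  obtain ⟨t, rfl⟩ := QuotientAddGroup.mk_surjective z
  induction t using TensorProduct.induction_on with
  | zero => exact zero
  | tmul m n => exact mk m n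
  | add x y hx hy => exact add _ _ hx hy

section lift

variable {P : Type} [AddCommGroup P]

private def toIntBilin (f : M →+ N →+ P) : M →ₗ[ℤ] N →ₗ[ℤ] P where
  toFun m := (f m).toIntLinearMap
  map_add' m m' := by ext n; simp
  map_smul' c m := by ext n; simp

/-- Lifting a balanced biadditive map to the tensor product. -/
def Tens.lift (f : M →+ N →+ P)
    (hf : ∀ (a : A) (m : M) (n : N), f (op a • m) n = f m (a • n)) :
    Tens A M N →+ P := by
  refine QuotientAddGroup.lift (TensRel A M N)
    (TensorProduct.lift (toIntBilin f)).toAddMonoidHom ?_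
  intro t ht
  refine AddSubgroup.closure_induction ?_ ?_ ?_ ?_ ht
  · rintro z ⟨a, m, n, rfl⟩
    simp [toIntBilin, hf a m n]
  · simp
  · intro x y _ _ hx hy
    have hx' : TensorProduct.lift (toIntBilin f) x = 0 := hx
    have hy' : TensorProduct.lift (toIntBilin f) y = 0 := hy
    simp [hx', hy']
  · intro x _ hx
    have hx' : TensorProduct.lift (toIntBilin f) x = 0 := hx
    simp [hx']

@[simp] theorem Tens.lift_mk (f : M →+ N →+ P)
    (hf : ∀ (a : A) (m : M) (n : N), f (op a • m) n = f m (a • n)) (m : M) (n : N) :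
    Tens.lift f hf (Tens.mk m n) = f m n := by
  show TensorProduct.lift (toIntBilin f) (m ⊗ₜ[ℤ] n) = f m n
  simp [toIntBilin]

end lift

end Tens

section AddHomExt

variable {A : Type} [Ring A] {M N : Type} [AddCommGroup M] [AddCommGroup N]
  [Module Aᵐᵒᵖ M] [Module A N] {P : Type} [AddCommGroup P]

theorem Tens.addHom_ext {f g : Tens A M N →+ P}
    (h : ∀ m n, f (Tens.mk m n) = g (Tens.mk m n)) : f = g := by
  ext z
  refine Tens.ind (motive := fun z => f z = g z) ?_ h ?_ z
  · simp
  · intro x y hx hy; simp [hx, hy]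

end AddHomExt

section LeftModule

variable {A : Type} [Ring A] {M N : Type} [AddCommGroup M] [AddCommGroup N]
  [Module Aᵐᵒᵖ M] [Module A N]
  {B : Type} [Ring B] [Module B M] [SMulCommClass Aᵐᵒᵖ B M]

/-- Left scalar multiplication on the tensor product via the left factor. -/
def Tens.lsmul (b : B) : Tens A M N →+ Tens A M N :=
  Tens.lift
    { toFun := fun m =>
        { toFun := fun n => Tens.mk (b • m) n
          map_zero' := by simp
          map_add' := fun n n' => Tens.mk_add_right _ _ _ }
      map_zero' := by ext n; simp
      map_add' := fun m m' => by ext n; simp [smul_add, Tens.mk_add_left] }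
    (by intro a m n
        simp only [AddMonoidHom.coe_mk, ZeroHom.coe_mk]
        rw [← smul_comm (op a) b m, Tens.mk_balance])

theorem Tens.lsmul_mk (b : B) (m : M) (n : N) :
    Tens.lsmul b (Tens.mk m n : Tens A M N) = Tens.mk (b • m) n := by
  simp [Tens.lsmul]

instance : SMul B (Tens A M N) := ⟨fun b z => Tens.lsmul b z⟩

@[simp] theorem Tens.smul_mk (b : B) (m : M) (n : N) :
    b • (Tens.mk m n : Tens A M N) = Tens.mk (b • m) n :=
  Tens.lsmul_mk b m n

instance : MulAction B (Tens A M N) where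
  one_smul z := DFunLike.congr_fun
    (Tens.addHom_ext (f := Tens.lsmul (1 : B)) (g := AddMonoidHom.id _)
      (fun m n => by rw [Tens.lsmul_mk, one_smul]; rfl)) z
  mul_smul b c z := DFunLike.congr_fun
    (Tens.addHom_ext (f := Tens.lsmul (b * c)) (g := (Tens.lsmul b).comp (Tens.lsmul c))
      (fun m n => by
        simp only [AddMonoidHom.coe_comp, Function.comp_apply, Tens.lsmul_mk, mul_smul])) z
  
instance : DistribMulAction B (Tens A M N) where
  smul_zero b := (Tens.lsmul b).map_zero
  smul_add b x y := (Tens.lsmul b).map_add x y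

instance Tens.instLeftModule : Module B (Tens A M N) where
  add_smul b c z := DFunLike.congr_fun
    (Tens.addHom_ext (f := Tens.lsmul (b + c)) (g := Tens.lsmul b + Tens.lsmul c)
      (fun m n => by
        simp only [AddMonoidHom.add_apply, Tens.lsmul_mk, add_smul, Tens.mk_add_left])) z
  zero_smul z := DFunLike.congr_fun
    (Tens.addHom_ext (f := Tens.lsmul (0 : B)) (g := 0)
      (fun m n => by simp [Tens.lsmul_mk])) z

end LeftModule

section RightModule

variable {A : Type} [Ring A] {M N : Type} [AddCommGroup M] [AddCommGroup N]
  [Module Aᵐᵒᵖ M] [Module A N]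
  {C : Type} [Ring C] [Module Cᵐᵒᵖ N] [SMulCommClass A Cᵐᵒᵖ N]

/-- Right scalar multiplication on the tensor product via the right factor. -/
def Tens.rsmul (c : Cᵐᵒᵖ) : Tens A M N →+ Tens A M N :=
  Tens.lift
    { toFun := fun m =>
        { toFun := fun n => Tens.mk m (c • n)
          map_zero' := by simp
          map_add' := fun n n' => by
            show (Tens.mk m (c • (n + n')) : Tens A M N) = _
            rw [smul_add, Tens.mk_add_right] }
      map_zero' := by ext n; simp
      map_add' := fun m m' => by ext n; exact Tens.mk_add_left _ _ _ }
    (by intro a m n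
        show (Tens.mk (op a • m) (c • n) : Tens A M N) = Tens.mk m (c • a • n)
        rw [Tens.mk_balance, smul_comm])

theorem Tens.rsmul_mk (c : Cᵐᵒᵖ) (m : M) (n : N) :
    Tens.rsmul c (Tens.mk m n : Tens A M N) = Tens.mk m (c • n) := by
  simp [Tens.rsmul]

instance : SMul Cᵐᵒᵖ (Tens A M N) := ⟨fun c z => Tens.rsmul c z⟩

@[simp] theorem Tens.op_smul_mk (c : Cᵐᵒᵖ) (m : M) (n : N) :
    c • (Tens.mk m n : Tens A M N) = Tens.mk m (c • n) :=
  Tens.rsmul_mk c m n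

instance : MulAction Cᵐᵒᵖ (Tens A M N) where
  one_smul z := DFunLike.congr_fun
    (Tens.addHom_ext (f := Tens.rsmul (1 : Cᵐᵒᵖ)) (g := AddMonoidHom.id _)
      (fun m n => by rw [Tens.rsmul_mk, one_smul]; rfl)) z
  mul_smul b c z := DFunLike.congr_fun
    (Tens.addHom_ext (f := Tens.rsmul (b * c)) (g := (Tens.rsmul b).comp (Tens.rsmul c))
      (fun m n => by
        simp only [AddMonoidHom.coe_comp, Function.comp_apply, Tens.rsmul_mk, mul_smul])) z

instance : DistribMulAction Cᵐᵒᵖ (Tens A M N) where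
  smul_zero c := (Tens.rsmul c).map_zero
  smul_add c x y := (Tens.rsmul c).map_add x y

instance Tens.instRightModule : Module Cᵐᵒᵖ (Tens A M N) where
  add_smul b c z := DFunLike.congr_fun
    (Tens.addHom_ext (f := Tens.rsmul (b + c)) (g := Tens.rsmul b + Tens.rsmul c)
      (fun m n => by
        simp only [AddMonoidHom.add_apply, Tens.rsmul_mk, add_smul, Tens.mk_add_right])) z
  zero_smul z := DFunLike.congr_fun
    (Tens.addHom_ext (f := Tens.rsmul (0 : Cᵐᵒᵖ)) (g := 0)
      (fun m n => by simp [Tens.rsmul_mk])) z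

end RightModule

section BimoduleTens

variable {A : Type} [Ring A] {M N : Type} [AddCommGroup M] [AddCommGroup N]
  [Module Aᵐᵒᵖ M] [Module A N]
  {B : Type} [Ring B] [Module B M] [SMulCommClass Aᵐᵒᵖ B M]
  {C : Type} [Ring C] [Module Cᵐᵒᵖ N] [SMulCommClass A Cᵐᵒᵖ N]

instance Tens.instSMulCommClass : SMulCommClass B Cᵐᵒᵖ (Tens A M N) where
  smul_comm b c z := by
    refine Tens.ind (motive := fun z => b • c • z = c • b • z) ?_ ?_ ?_ z
    · simp only [smul_zero]
    · intro m n
      rw [Tens.op_smul_mk, Tens.smul_mk, Tens.smul_mk, Tens.op_smul_mk]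
    · intro x y hx hy; simp only [smul_add, hx, hy]

instance Tens.instSMulCommClass' : SMulCommClass Cᵐᵒᵖ B (Tens A M N) :=
  SMulCommClass.symm _ _ _

end BimoduleTens

section Lifts

variable {A : Type} [Ring A] {M N : Type} [AddCommGroup M] [AddCommGroup N]
  [Module Aᵐᵒᵖ M] [Module A N]
  {B : Type} [Ring B] [Module B M] [SMulCommClass Aᵐᵒᵖ B M]

/-- Linear version of `Tens.lift`, for a balanced biadditive map which is moreover
`B`-linear in the first variable. -/
def Tens.liftL {P : Type} [AddCommGroup P] [Module B P] (f : M →+ N →+ P)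
    (hf : ∀ (a : A) (m : M) (n : N), f (op a • m) n = f m (a • n))
    (hl : ∀ (b : B) (m : M) (n : N), f (b • m) n = b • f m n) :
    Tens A M N →ₗ[B] P where
  toFun := Tens.lift f hf
  map_add' := (Tens.lift f hf).map_add
  map_smul' b z := by
    simp only [RingHom.id_apply]
    refine Tens.ind (motive := fun z => Tens.lift f hf (b • z) = b • Tens.lift f hf z) ?_ ?_ ?_ z
    · simp
    · intro m n
      rw [Tens.smul_mk, Tens.lift_mk, Tens.lift_mk, hl]
    · intro x y hx hy
      rw [smul_add, map_add, map_add, smul_add, hx, hy]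

@[simp] theorem Tens.liftL_mk {P : Type} [AddCommGroup P] [Module B P] (f : M →+ N →+ P)
    (hf : ∀ (a : A) (m : M) (n : N), f (op a • m) n = f m (a • n))
    (hl : ∀ (b : B) (m : M) (n : N), f (b • m) n = b • f m n) (m : M) (n : N) :
    Tens.liftL f hf hl (Tens.mk m n : Tens A M N) = f m n :=
  Tens.lift_mk f hf m n

/-- The functorial map `Id_M ⊗ g` on tensor products. -/
def Tens.mapRight {N' : Type} [AddCommGroup N'] [Module A N'] (g : N →ₗ[A] N') :
    Tens A M N →ₗ[B] Tens A M N' :=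
  Tens.liftL
    { toFun := fun m =>
        { toFun := fun n => Tens.mk m (g n)
          map_zero' := by simp
          map_add' := fun n n' => by
            show (Tens.mk m (g (n + n')) : Tens A M N') = _
            rw [map_add, Tens.mk_add_right] }
      map_zero' := by ext n; simp
      map_add' := fun m m' => by ext n; exact Tens.mk_add_left _ _ _ }
    (by intro a m n
        show (Tens.mk (op a • m) (g n) : Tens A M N') = Tens.mk m (g (a • n))
        rw [Tens.mk_balance, map_smul])
    (by intro b m n
        show (Tens.mk (b • m) (g n) : Tens A M N') = b • Tens.mk m (g n)
        rw [Tens.smul_mk])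

@[simp] theorem Tens.mapRight_mk {N' : Type} [AddCommGroup N'] [Module A N'] (g : N →ₗ[A] N')
    (m : M) (n : N) :
    (Tens.mapRight (B := B) g) (Tens.mk m n : Tens A M N) = Tens.mk m (g n) := by
  simp [Tens.mapRight]

theorem Tens.mapRight_comp {N' N'' : Type} [AddCommGroup N'] [Module A N']
    [AddCommGroup N''] [Module A N''] (g : N →ₗ[A] N') (h : N' →ₗ[A] N'') :
    (Tens.mapRight (B := B) (h.comp g) : Tens A M N →ₗ[B] Tens A M N'') =
      (Tens.mapRight h).comp (Tens.mapRight g) := by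
  apply LinearMap.ext
  refine Tens.ind (motive := fun z => (Tens.mapRight (B := B) (h.comp g)) z =
    ((Tens.mapRight (B := B) h).comp (Tens.mapRight g)) z) ?_ ?_ ?_
  · simp
  · intro m n; simp
  · intro x y hx hy; simp only [map_add, hx, hy]

theorem Tens.mapRight_id :
    (Tens.mapRight (B := B) (LinearMap.id : N →ₗ[A] N) : Tens A M N →ₗ[B] Tens A M N) =
      LinearMap.id := by
  apply LinearMap.ext
  refine Tens.ind (motive := fun z => (Tens.mapRight (B := B) (LinearMap.id : N →ₗ[A] N)) z =
    LinearMap.id z) ?_ ?_ ?_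
  · simp
  · intro m n; simp
  · intro x y hx hy; simp only [map_add, hx, hy]

end Lifts


section Pair

open CategoryTheory

variable (A X : Type) [Ring A] [AddCommGroup X] [Module A X] [Module Aᵐᵒᵖ X]
  [SMulCommClass A Aᵐᵒᵖ X] [SMulCommClass Aᵐᵒᵖ A X]

/-- The category of pairs `(M, σ)` with `M` a left `A`-module and
`σ : X ⊗_A M → M` an `A`-linear map with `σ ∘ (Id_X ⊗ σ) = 0`;
this models modules over the trivial extension `A ⊕ X`. -/
structure PairMod where
  carrier : Type
  [acg : AddCommGroup carrier]
  [amod : Module A carrier]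
  σ : Tens A X carrier →ₗ[A] carrier
  nil : ∀ (x : X) (z : Tens A X carrier), σ (Tens.mk x (σ z)) = 0

attribute [instance] PairMod.acg PairMod.amod

variable {A X}

/-- Morphisms of pairs: `A`-linear maps commuting with the structure maps. -/
@[ext] structure PairHom (P Q : PairMod A X) where
  f : P.carrier →ₗ[A] Q.carrier
  comm : ∀ (x : X) (m : P.carrier), f (P.σ (Tens.mk x m)) = Q.σ (Tens.mk x (f m))

instance : Category (PairMod A X) where
  Hom := PairHom
  id P := ⟨LinearMap.id, fun x m => rfl⟩
  comp {P Q R} f g := ⟨g.f.comp f.f, fun x m => by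
    simp only [LinearMap.comp_apply, f.comm, g.comm]⟩
  id_comp f := by apply PairHom.ext; rfl
  comp_id f := by apply PairHom.ext; rfl
  assoc f g h := by apply PairHom.ext; rfl

@[simp] theorem PairMod.id_f (P : PairMod A X) : (𝟙 P : PairHom P P).f = LinearMap.id := rfl

@[simp] theorem PairMod.comp_f {P Q R : PairMod A X} (f : P ⟶ Q) (g : Q ⟶ R) :
    (f ≫ g).f = g.f.comp f.f := rfl

theorem PairHom.comm' {P Q : PairMod A X} (f : P ⟶ Q) (z : Tens A X P.carrier) :
    f.f (P.σ z) = Q.σ (Tens.mapRight (B := A) f.f z) := by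
  refine Tens.ind (motive := fun z => f.f (P.σ z) = Q.σ (Tens.mapRight (B := A) f.f z))
    ?_ ?_ ?_ z
  · simp
  · intro x m; rw [f.comm, Tens.mapRight_mk]
  · intro x y hx hy; simp only [map_add, hx, hy]

variable (A X)

/-- The sign-change functor `S : (M, σ) ↦ (M, -σ)`. -/
def PMS : PairMod A X ⥤ PairMod A X where
  obj P :=
    { carrier := P.carrier
      σ := -P.σ
      nil := fun x z => by
        simp only [LinearMap.neg_apply, Tens.mk_neg_right, map_neg, neg_neg, P.nil] }
  map {P Q} f :=
    { f := f.f
      comm := fun x m => by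
        simp only [LinearMap.neg_apply, map_neg, f.comm, Tens.mk_neg_right] }
  map_id P := rfl
  map_comp f g := rfl

/-- The functor `X ⊗_A - : (M, σ) ↦ (X ⊗_A M, Id_X ⊗ σ)`. -/
def XF : PairMod A X ⥤ PairMod A X where
  obj P :=
    { carrier := Tens A X P.carrier
      σ := Tens.mapRight (B := A) P.σ
      nil := fun x z => by
        rw [Tens.mapRight_mk]
        have : P.σ (Tens.mapRight (B := A) P.σ z) = 0 := by
          refine Tens.ind (motive := fun z => P.σ (Tens.mapRight (B := A) P.σ z) = 0) ?_ ?_ ?_ z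
          · simp
          · intro x' u; rw [Tens.mapRight_mk, P.nil]
          · intro u v hu hv; simp only [map_add, hu, hv, add_zero]
        rw [this, Tens.mk_zero_right] }
  map {P Q} f :=
    { f := Tens.mapRight (B := A) f.f
      comm := fun x m => by
        rw [Tens.mapRight_mk, Tens.mapRight_mk, Tens.mapRight_mk, PairHom.comm'] }
  map_id P := by
    apply PairHom.ext
    exact Tens.mapRight_id
  map_comp f g := by
    apply PairHom.ext
    exact Tens.mapRight_comp _ _

/-- The forgetful (restriction) functor to `A`-modules. -/
def resF : PairMod A X ⥤ ModuleCat.{0} A where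
  obj P := ModuleCat.of A P.carrier
  map f := ModuleCat.ofHom f.f

/-- The structure map of the pair corresponding to `T ⊗_A L`. -/
def tau (L : Type) [AddCommGroup L] [Module A L] :
    Tens A X (L × Tens A X L) →ₗ[A] (L × Tens A X L) :=
  Tens.liftL
    { toFun := fun x =>
        { toFun := fun p => (0, Tens.mk x p.1)
          map_zero' := by simp
          map_add' := fun p q => by simp [Tens.mk_add_right, Prod.ext_iff] }
      map_zero' := by ext p <;> simp
      map_add' := fun x x' => by ext p <;> simp [Tens.mk_add_left] }
    (by intro a x p
        show ((0 : L), Tens.mk (op a • x) p.1) = ((0 : L), Tens.mk x (a • p.1))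
        rw [Tens.mk_balance])
    (by intro a x p
        show ((0 : L), Tens.mk (a • x) p.1) = a • ((0 : L), Tens.mk x p.1)
        rw [Prod.smul_mk, smul_zero, Tens.smul_mk])

@[simp] theorem tau_mk (L : Type) [AddCommGroup L] [Module A L] (x : X) (p : L × Tens A X L) :
    tau A X L (Tens.mk x p) = (0, Tens.mk x p.1) := by
  simp [tau]

theorem tau_fst (L : Type) [AddCommGroup L] [Module A L] (z : Tens A X (L × Tens A X L)) :
    (tau A X L z).1 = 0 := by
  refine Tens.ind (motive := fun z => (tau A X L z).1 = 0) ?_ ?_ ?_ z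
  · simp
  · intro x p; simp
  · intro u v hu hv; simp only [map_add, Prod.fst_add, hu, hv, add_zero]

/-- The pair corresponding to the induced module `T ⊗_A L`. -/
def TFobj (L : Type) [AddCommGroup L] [Module A L] : PairMod A X where
  carrier := L × Tens A X L
  σ := tau A X L
  nil := fun x z => by
    rw [show tau A X L z = (0, (tau A X L z).2) from Prod.ext (tau_fst A X L z) rfl]
    rw [tau_mk]
    simp

/-- The functor `T ⊗_A - : A-Mod → T-Mod` at the level of pairs. -/
def TF : ModuleCat.{0} A ⥤ PairMod A X where
  obj L := TFobj A X L
  map {L L'} g :=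
    { f := LinearMap.prodMap g.hom (Tens.mapRight (B := A) g.hom)
      comm := fun x (m : L × Tens A X L) => by
        show LinearMap.prodMap g.hom (Tens.mapRight (B := A) g.hom) (tau A X L (Tens.mk x m)) =
          tau A X L' (Tens.mk x (LinearMap.prodMap g.hom (Tens.mapRight (B := A) g.hom) m))
        rw [tau_mk, tau_mk]
        show (_, Tens.mapRight (B := A) g.hom (Tens.mk x m.1)) = _
        rw [Tens.mapRight_mk]
        simp only [map_zero, Prod.mk.injEq, true_and]
        exact ⟨by simp, rfl⟩ }
  map_id L := by
    apply PairHom.ext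
    apply LinearMap.ext
    rintro ⟨l, u⟩
    exact Prod.ext rfl (DFunLike.congr_fun
      (Tens.mapRight_id (A := A) (M := X) (N := L) (B := A)) u)
  map_comp {L L' L''} f g := by
    apply PairHom.ext
    apply LinearMap.ext
    rintro ⟨l, u⟩
    exact Prod.ext rfl (DFunLike.congr_fun
      (Tens.mapRight_comp (B := A) f.hom g.hom) u)

end Pair

section Extra

open CategoryTheory

variable (A X : Type) [Ring A] [AddCommGroup X] [Module A X] [Module Aᵐᵒᵖ X]
  [SMulCommClass A Aᵐᵒᵖ X] [SMulCommClass Aᵐᵒᵖ A X]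

/-- The structure map of the pair corresponding to the regular module `T = A ⊕ X`. -/
def sigmaT : Tens A X (A × X) →ₗ[A] A × X :=
  Tens.liftL
    { toFun := fun x =>
        { toFun := fun p => ((0 : A), op p.1 • x)
          map_zero' := by simp
          map_add' := fun p q => by
            show ((0 : A), op (p.1 + q.1) • x) = ((0 : A) + 0, op p.1 • x + op q.1 • x)
            rw [Prod.mk.injEq]
            constructor
            · rw [add_zero]
            · rw [← add_smul]; rfl }
      map_zero' := by ext p <;> simp
      map_add' := fun x x' => by ext p <;> simp [smul_add] }
    (by intro a x p
        show ((0 : A), op p.1 • op a • x) = ((0 : A), op (a • p).1 • x)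
        rw [Prod.mk.injEq]
        refine ⟨rfl, ?_⟩
        rw [← mul_smul]
        rfl)
    (by intro a x p
        show ((0 : A), op p.1 • a • x) = a • ((0 : A), op p.1 • x)
        rw [Prod.smul_mk, smul_zero, smul_comm])

@[simp] theorem sigmaT_mk (x : X) (p : A × X) :
    sigmaT A X (Tens.mk x p) = ((0 : A), op p.1 • x) := by
  simp [sigmaT]

theorem sigmaT_fst (z : Tens A X (A × X)) : (sigmaT A X z).1 = 0 := by
  refine Tens.ind (motive := fun z => (sigmaT A X z).1 = 0) ?_ ?_ ?_ z
  · simp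
  · intro x p; simp
  · intro u v hu hv; simp only [map_add, Prod.fst_add, hu, hv, add_zero]

/-- The pair corresponding to the regular module `T = A ⊕ X` over the trivial extension. -/
def regT : PairMod A X where
  carrier := A × X
  σ := sigmaT A X
  nil := fun x z => by
    rw [show sigmaT A X z = (0, (sigmaT A X z).2) from Prod.ext (sigmaT_fst A X z) rfl,
      sigmaT_mk]
    simp

variable {A X}

-- The module structure over the trivial extension `T = A ⊕ X` associated to a
-- pair `(M, σ)`: the action is `(a, x) • m = a • m + σ(x ⊗ m)`.

set_option maxHeartbeats 1000000 in
def PairMod.toModule (P : PairMod A X) : Module (TrivSqZeroExt A X) P.carrier where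
  smul t m := t.fst • m + P.σ (Tens.mk t.snd m)
  one_smul m := by
    show (1 : TrivSqZeroExt A X).fst • m + P.σ (Tens.mk (1 : TrivSqZeroExt A X).snd m) = m
    rw [TrivSqZeroExt.fst_one, TrivSqZeroExt.snd_one, one_smul, Tens.mk_zero_left, map_zero,
      add_zero]
  mul_smul s t m := by
    show (s * t).fst • m + P.σ (Tens.mk (s * t).snd m)
        = s.fst • (t.fst • m + P.σ (Tens.mk t.snd m))
          + P.σ (Tens.mk s.snd (t.fst • m + P.σ (Tens.mk t.snd m)))
    rw [TrivSqZeroExt.fst_mul, TrivSqZeroExt.snd_mul]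
    show (s.fst * t.fst) • m + P.σ (Tens.mk (s.fst • t.snd + MulOpposite.op t.fst • s.snd) m) = _
    rw [Tens.mk_add_left, map_add]
    have hb : (Tens.mk (MulOpposite.op t.fst • s.snd) m : Tens A X P.carrier) = Tens.mk s.snd (t.fst • m) :=
      Tens.mk_balance _ _ _
    have h1 : (Tens.mk (s.fst • t.snd) m : Tens A X P.carrier) = s.fst • Tens.mk t.snd m :=
      (Tens.smul_mk _ _ _).symm
    rw [hb, h1, map_smul, Tens.mk_add_right, map_add, P.nil, add_zero, mul_smul, smul_add]
    abel
  smul_zero t := by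
    show t.fst • (0 : P.carrier) + P.σ (Tens.mk t.snd 0) = 0
    rw [smul_zero, Tens.mk_zero_right, map_zero, add_zero]
  smul_add t m m' := by
    show t.fst • (m + m') + P.σ (Tens.mk t.snd (m + m'))
      = (t.fst • m + P.σ (Tens.mk t.snd m)) + (t.fst • m' + P.σ (Tens.mk t.snd m'))
    rw [smul_add, Tens.mk_add_right, map_add]
    abel
  add_smul s t m := by
    show (s + t).fst • m + P.σ (Tens.mk (s + t).snd m)
      = (s.fst • m + P.σ (Tens.mk s.snd m)) + (t.fst • m + P.σ (Tens.mk t.snd m))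
    rw [TrivSqZeroExt.fst_add, TrivSqZeroExt.snd_add, add_smul, Tens.mk_add_left, map_add]
    abel
  zero_smul m := by
    show (0 : TrivSqZeroExt A X).fst • m + P.σ (Tens.mk (0 : TrivSqZeroExt A X).snd m) = 0
    rw [TrivSqZeroExt.fst_zero, TrivSqZeroExt.snd_zero, zero_smul, Tens.mk_zero_left, map_zero,
      add_zero]

/-- The bundled `T`-module associated to a pair. -/
def PairMod.toModuleCat (P : PairMod A X) : ModuleCat.{0} (TrivSqZeroExt A X) :=
  letI := P.toModule
  ModuleCat.of (TrivSqZeroExt A X) P.carrier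

end Extra

section ProjDim

/-- `ProjDimLE R n M` means `M` admits a projective resolution of length at most `n`. -/
def ProjDimLE (R : Type) [Ring R] : ℕ → ModuleCat.{0} R → Prop
  | 0, M => CategoryTheory.Projective M
  | (n+1), M => CategoryTheory.Projective M ∨
      ∃ (P K : ModuleCat.{0} R) (i : K ⟶ P) (p : P ⟶ M),
        CategoryTheory.Projective P ∧ Function.Injective i ∧ Function.Surjective p ∧
        Function.Exact i p ∧ ProjDimLE R n K

/-- `M` has finite projective dimension over `R`. -/
def FinProjDim (R : Type) [Ring R] (M : ModuleCat.{0} R) : Prop :=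
  ∃ n, ProjDimLE R n M

end ProjDim

section TrivExtInst

instance (R : Type) [Ring R] : SMulCommClass Rᵐᵒᵖ R R :=
  ⟨fun a b c => by
    rw [MulOpposite.smul_eq_mul_unop, MulOpposite.smul_eq_mul_unop, smul_eq_mul, smul_eq_mul,
      mul_assoc]⟩

variable (R Z : Type) [Ring R] [AddCommGroup Z] [Module R Z] [Module Rᵐᵒᵖ Z]
  [SMulCommClass R Rᵐᵒᵖ Z] [SMulCommClass Rᵐᵒᵖ R Z]

instance : SMulCommClass Rᵐᵒᵖ (TrivSqZeroExt R Z) (TrivSqZeroExt R Z) where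
  smul_comm a s t := by
    refine TrivSqZeroExt.ext ?_ ?_
    · show (s.fst * t.fst) * a.unop = s.fst * (t.fst * a.unop)
      rw [mul_assoc]
    · show a • (s.fst • t.snd + op t.fst • s.snd)
        = s.fst • (a • t.snd) + op (t.fst * a.unop) • s.snd
      rw [smul_add, smul_comm a s.fst t.snd]
      congr 1
      rw [MulOpposite.op_mul, MulOpposite.op_unop, mul_smul]

end TrivExtInst

end

end Paper




noncomputable section AssocAux

open MulOpposite Paper

variable {A B X Y : Type} [Ring A] [Ring B]
    [AddCommGroup X] [Module A X] [Module Bᵐᵒᵖ X]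
    [SMulCommClass A Bᵐᵒᵖ X] [SMulCommClass Bᵐᵒᵖ A X]
    [AddCommGroup Y] [Module B Y] [Module Aᵐᵒᵖ Y]
    [SMulCommClass B Aᵐᵒᵖ Y] [SMulCommClass Aᵐᵒᵖ B Y]
    {M : Type} [AddCommGroup M] [Module A M]

/-- Inner part of the forward map: for fixed `x`, sends `y ⊗ m ↦ (x ⊗ y) ⊗ m`. -/
def fwdInner (x : X) : Tens A Y M →+ Tens A (Tens B X Y) M :=
  Tens.lift
    { toFun := fun y =>
        { toFun := fun m => Tens.mk (Tens.mk x y) m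
          map_zero' := by simp
          map_add' := fun m m' => Tens.mk_add_right _ _ _ }
      map_zero' := by
        ext m
        simp
      map_add' := fun y y' => by
        ext m
        show (Tens.mk (Tens.mk x (y + y')) m : Tens A (Tens B X Y) M) = _
        rw [Tens.mk_add_right, Tens.mk_add_left]
        rfl }
    (by
      intro a y m
      show (Tens.mk (Tens.mk x (op a • y)) m : Tens A (Tens B X Y) M)
        = Tens.mk (Tens.mk x y) (a • m)
      rw [← Tens.op_smul_mk, Tens.mk_balance])

@[simp] theorem fwdInner_mk (x : X) (y : Y) (m : M) :
    fwdInner (A := A) (B := B) x (Tens.mk y m) = Tens.mk (Tens.mk x y) m := by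
  simp [fwdInner]

/-- The forward map `X ⊗_B (Y ⊗_A M) → (X ⊗_B Y) ⊗_A M`. -/
def fwdMap : Tens B X (Tens A Y M) →ₗ[A] Tens A (Tens B X Y) M :=
  Tens.liftL
    { toFun := fun x => fwdInner (A := A) (B := B) x
      map_zero' := Tens.addHom_ext (fun y m => by
        rw [fwdInner_mk]
        simp)
      map_add' := fun x x' => Tens.addHom_ext (fun y m => by
        rw [AddMonoidHom.add_apply, fwdInner_mk, fwdInner_mk, fwdInner_mk,
          Tens.mk_add_left, Tens.mk_add_left]) }
    (by
      intro b x z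
      refine DFunLike.congr_fun (Tens.addHom_ext
        (f := fwdInner (A := A) (B := B) (op b • x))
        (g := (fwdInner (A := A) (B := B) x).comp (Tens.lsmul b)) (fun y m => ?_)) z
      rw [fwdInner_mk, AddMonoidHom.comp_apply, Tens.lsmul_mk, fwdInner_mk,
        Tens.mk_balance])
    (by
      intro a x z
      refine DFunLike.congr_fun (Tens.addHom_ext
        (f := fwdInner (A := A) (B := B) (a • x))
        (g := (Tens.lsmul a).comp (fwdInner (A := A) (B := B) x)) (fun y m => ?_)) z
      rw [fwdInner_mk, AddMonoidHom.comp_apply, fwdInner_mk, Tens.lsmul_mk,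
        Tens.smul_mk])

@[simp] theorem fwdMap_mk (x : X) (y : Y) (m : M) :
    fwdMap (A := A) (B := B) (Tens.mk x (Tens.mk y m))
      = Tens.mk (Tens.mk x y) m := by
  show Tens.liftL _ _ _ (Tens.mk x (Tens.mk y m)) = _
  rw [Tens.liftL_mk]
  exact fwdInner_mk x y m

/-- Inner part of the backward map: `(x ⊗ y) ↦ (m ↦ x ⊗ (y ⊗ m))`. -/
def bwdInner : Tens B X Y →+ (M →+ Tens B X (Tens A Y M)) :=
  Tens.lift
    { toFun := fun x =>
        { toFun := fun y =>
            { toFun := fun m => Tens.mk x (Tens.mk y m)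
              map_zero' := by simp
              map_add' := fun m m' => by
                show (Tens.mk x (Tens.mk y (m + m')) : Tens B X (Tens A Y M)) = _
                rw [Tens.mk_add_right, Tens.mk_add_right] }
          map_zero' := by
            ext m
            simp
          map_add' := fun y y' => by
            ext m
            show (Tens.mk x (Tens.mk (y + y') m) : Tens B X (Tens A Y M)) = _
            rw [Tens.mk_add_left, Tens.mk_add_right]
            rfl }
      map_zero' := by
        ext y m
        simp
      map_add' := fun x x' => by
        ext y m
        exact Tens.mk_add_left _ _ _ }
    (by
      intro b x y
      ext m
      show (Tens.mk (op b • x) (Tens.mk y m) : Tens B X (Tens A Y M))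
        = Tens.mk x (Tens.mk (b • y) m)
      rw [Tens.mk_balance, Tens.smul_mk])

@[simp] theorem bwdInner_mk (x : X) (y : Y) (m : M) :
    bwdInner (A := A) (B := B) (M := M) (Tens.mk x y) m = Tens.mk x (Tens.mk y m) := by
  rw [bwdInner, Tens.lift_mk]
  rfl

/-- The backward map `(X ⊗_B Y) ⊗_A M → X ⊗_B (Y ⊗_A M)`. -/
def bwdMap : Tens A (Tens B X Y) M →+ Tens B X (Tens A Y M) :=
  Tens.lift (bwdInner (A := A) (B := B) (M := M))
    (by
      intro a t m
      refine Tens.ind (motive := fun t =>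
        bwdInner (A := A) (B := B) (M := M) (op a • t) m = bwdInner (A := A) (B := B) (M := M) t (a • m)) ?_ ?_ ?_ t
      · simp
      · intro x y
        rw [Tens.op_smul_mk, bwdInner_mk, bwdInner_mk, Tens.mk_balance]
      · intro u v hu hv
        rw [smul_add, map_add, map_add, AddMonoidHom.add_apply, AddMonoidHom.add_apply,
          hu, hv])

@[simp] theorem bwdMap_mk (x : X) (y : Y) (m : M) :
    bwdMap (A := A) (B := B) (Tens.mk (Tens.mk x y) m) = Tens.mk x (Tens.mk y m) := by
  show Tens.lift _ _ _ = _
  rw [Tens.lift_mk, bwdInner_mk]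

theorem bwd_fwd (z : Tens B X (Tens A Y M)) :
    bwdMap (A := A) (B := B) (fwdMap (A := A) (B := B) z) = z := by
  refine Tens.ind (motive := fun z => bwdMap (A := A) (fwdMap (A := A) z) = z) ?_ ?_ ?_ z
  · simp
  · intro x w
    refine Tens.ind (motive := fun w =>
      bwdMap (A := A) (fwdMap (A := A) (Tens.mk x w)) = Tens.mk x w) ?_ ?_ ?_ w
    · simp
    · intro y m
      rw [fwdMap_mk, bwdMap_mk]
    · intro u v hu hv
      rw [Tens.mk_add_right, map_add, map_add, hu, hv]
  · intro u v hu hv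
    rw [map_add, map_add, hu, hv]

theorem fwd_bwd (z : Tens A (Tens B X Y) M) :
    fwdMap (A := A) (B := B) (bwdMap (A := A) (B := B) z) = z := by
  refine Tens.ind (motive := fun z => fwdMap (A := A) (bwdMap (A := A) z) = z) ?_ ?_ ?_ z
  · simp
  · intro t m
    refine Tens.ind (motive := fun t =>
      fwdMap (A := A) (bwdMap (A := A) (Tens.mk t m)) = Tens.mk t m) ?_ ?_ ?_ t
    · simp
    · intro x y
      rw [bwdMap_mk, fwdMap_mk]
    · intro u v hu hv
      rw [Tens.mk_add_left, map_add, map_add, hu, hv]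
  · intro u v hu hv
    rw [map_add, map_add, hu, hv]

/-- The associativity isomorphism. -/
def assocEquiv : Tens B X (Tens A Y M) ≃ₗ[A] Tens A (Tens B X Y) M :=
  { fwdMap (A := A) (B := B) (M := M) with
    invFun := bwdMap (A := A) (B := B) (M := M)
    left_inv := bwd_fwd
    right_inv := fwd_bwd }

@[simp] theorem assocEquiv_mk (x : X) (y : Y) (m : M) :
    assocEquiv (A := A) (B := B) (Tens.mk x (Tens.mk y m)) = Tens.mk (Tens.mk x y) m :=
  fwdMap_mk x y m

end AssocAux

open CategoryTheory Paper in
/-- The composite of `Y ⊗_A - : Ã-Mod → B̃-Mod` and `X ⊗_B - : B̃-Mod → Ã-Mod` is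
naturally isomorphic to `(X ⊗_B Y) ⊗_A -`. -/
theorem stmt_8 (A B X Y : Type) [Ring A] [Ring B]
    [AddCommGroup X] [Module A X] [Module Bᵐᵒᵖ X]
    [SMulCommClass A Bᵐᵒᵖ X] [SMulCommClass Bᵐᵒᵖ A X]
    [AddCommGroup Y] [Module B Y] [Module Aᵐᵒᵖ Y]
    [SMulCommClass B Aᵐᵒᵖ Y] [SMulCommClass Aᵐᵒᵖ B Y] :
    ∃ E : ∀ P : PairMod A (Tens B X Y),
        Tens B X (Tens A Y P.carrier) ≃ₗ[A] Tens A (Tens B X Y) P.carrier,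
      (∀ (P : PairMod A (Tens B X Y)) (x : X) (y : Y) (m : P.carrier),
        E P (Tens.mk x (Tens.mk y m)) = Tens.mk (Tens.mk x y) m) ∧
      -- naturality:
      (∀ (P Q : PairMod A (Tens B X Y)) (f : P ⟶ Q)
        (u : Tens B X (Tens A Y P.carrier)),
        E Q ((Tens.mapRight (B := A)
            (Tens.mapRight (B := B) (PairHom.f f))) u) =
          (Tens.mapRight (B := A) (PairHom.f f)) (E P u)) := by
  refine ⟨fun P => assocEquiv (A := A) (B := B) (M := P.carrier), fun P x y m => assocEquiv_mk x y m, ?_⟩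
  intro P Q f u
  refine Tens.ind (motive := fun u =>
      assocEquiv (A := A) ((Tens.mapRight (B := A)
        (Tens.mapRight (B := B) (PairHom.f f))) u)
      = (Tens.mapRight (B := A) (PairHom.f f)) (assocEquiv (A := A) u)) ?_ ?_ ?_ u
  · simp
  · intro x w
    refine Tens.ind (motive := fun w =>
        assocEquiv (A := A) ((Tens.mapRight (B := A)
          (Tens.mapRight (B := B) (PairHom.f f))) (Tens.mk x w))
        = (Tens.mapRight (B := A) (PairHom.f f))
            (assocEquiv (A := A) (Tens.mk x w))) ?_ ?_ ?_ w
    · simp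
    · intro y m
      rw [Tens.mapRight_mk, Tens.mapRight_mk, assocEquiv_mk, assocEquiv_mk,
        Tens.mapRight_mk]
    · intro u v hu hv
      simp only [Tens.mk_add_right, map_add, hu, hv]
  · intro u v hu hv
    simp only [map_add, hu, hv]
end

section
/- Let A be a ring, X an A-A-bimodule, T = A ⊕ X the trivial extension, and let res : T-Mod → A-Mod be the restriction functor along the inclusion A ⊆ T. Then there is a short exact sequence of endofunctors on T-Mod: 0 → (X ⊗_A -) ∘ S → (T ⊗_A -) ∘ res → Id_{T-Mod} → 0, i.e., for every T-module M the sequence is exact and all maps are natural in M. -/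
open MulOpposite

namespace Paper

section Aux

open CategoryTheory

variable {A X : Type} [Ring A] [AddCommGroup X] [Module A X] [Module Aᵐᵒᵖ X]
  [SMulCommClass A Aᵐᵒᵖ X] [SMulCommClass Aᵐᵒᵖ A X]

theorem aux_beta_comm (P : PairMod A X) (x : X) (m : P.carrier) (u : Tens A X P.carrier) :
    (0 : P.carrier) + P.σ (Tens.mk x m) = P.σ (Tens.mk x (m + P.σ u)) := by
  rw [Tens.mk_add_right, map_add, P.nil, add_zero, zero_add]

theorem aux_beta_nat {P Q : PairMod A X} (g : P ⟶ Q) (m : P.carrier)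
    (u : Tens A X P.carrier) :
    g.f m + Q.σ (Tens.mapRight (B := A) g.f u) = g.f (m + P.σ u) := by
  rw [← PairHom.comm', map_add]

theorem aux_surj (P : PairMod A X) (m : P.carrier) :
    m + P.σ (0 : Tens A X P.carrier) = m := by
  rw [map_zero, add_zero]

theorem aux_exact (P : PairMod A X) (m : P.carrier) (u : Tens A X P.carrier)
    (h : m + P.σ u = 0) : -(P.σ u) = m :=
  (eq_neg_of_add_eq_zero_left h).symm

end Aux

end Paper

open CategoryTheory Paper in
/-- The short exact sequence of endofunctors
`0 → (X ⊗_A -) ∘ S → (T ⊗_A -) ∘ res → Id → 0` on `T`-Mod. -/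
theorem stmt_14 (A X : Type) [Ring A] [AddCommGroup X] [Module A X] [Module Aᵐᵒᵖ X]
    [SMulCommClass A Aᵐᵒᵖ X] [SMulCommClass Aᵐᵒᵖ A X] :
    ∃ (α : PMS A X ⋙ XF A X ⟶ resF A X ⋙ TF A X)
      (β : resF A X ⋙ TF A X ⟶ Functor.id (PairMod A X)),
      ∀ P : PairMod A X,
        (∀ u : Tens A X P.carrier, PairHom.f (α.app P) u = (-(P.σ u), u)) ∧
        (∀ q : P.carrier × Tens A X P.carrier, PairHom.f (β.app P) q = q.1 + P.σ q.2) ∧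
        Function.Injective (PairHom.f (α.app P)) ∧
        Function.Surjective (PairHom.f (β.app P)) ∧
        Function.Exact (PairHom.f (α.app P)) (PairHom.f (β.app P)) := by
  classical
  refine ⟨
    { app := fun P =>
        { f := LinearMap.prod (-P.σ) LinearMap.id
          comm := by
            intro x (m : Tens A X P.carrier)
            show LinearMap.prod (-P.σ) LinearMap.id
                (Tens.mapRight (B := A) (-P.σ) (Tens.mk x m))
              = tau A X P.carrier (Tens.mk x (LinearMap.prod (-P.σ) LinearMap.id m))
            rw [Tens.mapRight_mk, tau_mk]
            refine Prod.ext ?_ rfl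
            show (-P.σ) (Tens.mk x ((-P.σ) m)) = 0
            simp [Tens.mk_neg_right, P.nil] }
      naturality := by
        intro P Q g
        apply PairHom.ext
        apply LinearMap.ext
        intro (u : Tens A X P.carrier)
        show LinearMap.prod (-Q.σ) LinearMap.id (Tens.mapRight (B := A) g.f u)
          = LinearMap.prodMap g.f (Tens.mapRight (B := A) g.f)
              (LinearMap.prod (-P.σ) LinearMap.id u)
        refine Prod.ext ?_ rfl
        show -(Q.σ (Tens.mapRight (B := A) g.f u)) = g.f (-(P.σ u))
        rw [map_neg, PairHom.comm'] },
    { app := fun P =>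
        { f := LinearMap.coprod LinearMap.id P.σ
          comm := by
            rintro x ⟨m, u⟩
            exact aux_beta_comm P x m u }
      naturality := by
        intro P Q g
        apply PairHom.ext
        apply LinearMap.ext
        rintro ⟨m, u⟩
        exact aux_beta_nat g m u }, ?_⟩
  intro P
  refine ⟨fun u => rfl, fun q => rfl, ?_, ?_, ?_⟩
  · intro u v h
    exact congrArg Prod.snd h
  · intro m
    exact ⟨(m, 0), aux_surj P m⟩
  · intro q
    simp only [Set.mem_range]
    constructor
    · intro h
      exact ⟨q.2, Prod.ext (aux_exact P q.1 q.2 h) rfl⟩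
    · rintro ⟨u, rfl⟩
      show -(P.σ u) + P.σ u = 0
      exact neg_add_cancel _
end
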